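/- Let G : ℝ^m → ℝ be μ-strongly convex (μ > 0) and L-smooth (L ≥ μ), and let S be a real m×m symmetric positive semidefinite matrix. Define F : ℝ^m → ℝ by F(y) = sup_{λ∈ℝ^m} (−G(λ) − ⟨y, Sλ⟩). Then F is (λmax(S)²/μ)-smooth, and F is (λ⁺min(S²)/L)-strongly convex on the subspace Range(S): for all y, y' ∈ Range(S), ⟨∇F(y) − ∇F(y'), y − y'⟩ ≥ (λ⁺min(S²)/L)‖y − y'‖². -/

import Mathlib

open scoped RealInnerProductSpace
open Matrix

/-- The largest eigenvalue of a (positive semidefinite symmetric) matrix, as the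
operator norm of the induced linear map between Euclidean spaces. -/
noncomputable def lambdaMax {m : ℕ} (M : Matrix (Fin m) (Fin m) ℝ) : ℝ :=
  ‖LinearMap.toContinuousLinearMap (Matrix.toEuclideanLin M)‖

/-- The smallest nonzero (i.e. positive) eigenvalue of a positive semidefinite matrix. -/
noncomputable def posMinEig {m : ℕ} (M : Matrix (Fin m) (Fin m) ℝ) : ℝ :=
  sInf {t : ℝ | 0 < t ∧ ∃ v : EuclideanSpace ℝ (Fin m), v ≠ 0 ∧
    Matrix.toEuclideanLin M v = t • v}

/-!
Since `G` is `μ`-strongly convex with `L`-Lipschitz gradient, `∇G` is a bijection (a damped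
gradient step is a contraction), so the supremum defining `F y` is attained exactly at the point
`λ(y)` with `∇G (λ y) = -S y`. The function `y ↦ -S λ(y)` is then a subgradient field of `F`,
and it is `‖S‖² / μ`-Lipschitz because strong monotonicity of `∇G` makes `λ` `‖S‖ / μ`-Lipschitz;
a Lipschitz subgradient field is the gradient. For the lower bound,
`⟪∇F y - ∇F y', y - y'⟫ = ⟪∇G λ(y') - ∇G λ(y), λ(y') - λ(y)⟫ ≥ ‖S (y - y')‖² / L` by
co-coercivity of the gradient of a convex `L`-smooth function, and on `Range S` one has
`‖S w‖² ≥ λ⁺min(S²) ‖w‖²` by expanding `w` in an eigenbasis of `S`.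
-/

section

variable {E : Type*} [NormedAddCommGroup E] [InnerProductSpace ℝ E]

lemma LinearMap.IsSymmetric.mul_sq_norm_le_sq_norm_apply [FiniteDimensional ℝ E]
    {T : E →ₗ[ℝ] E} (hT : T.IsSymmetric)
    {c : ℝ} (hc : ∀ t : ℝ, 0 < t → ∀ v : E, v ≠ 0 → T (T v) = t • v → c ≤ t)
    {w : E} (hw : w ∈ LinearMap.range T) : c * ‖w‖ ^ 2 ≤ ‖T w‖ ^ 2 := by
  set b := hT.eigenvectorBasis rfl
  set e := hT.eigenvalues rfl
  have happly : ∀ i, T (b i) = e i • b i := fun i => by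
    exact_mod_cast hT.apply_eigenvectorBasis rfl i
  have hcoord : ∀ i v, ⟪b i, T v⟫ = e i * ⟪b i, v⟫ := fun i v => by
    rw [← hT, happly, real_inner_smul_left]
  obtain ⟨u, rfl⟩ := hw
  rw [← b.sum_sq_inner_right, ← b.sum_sq_inner_right, Finset.mul_sum]
  refine Finset.sum_le_sum fun i _ => ?_
  rcases eq_or_ne (e i) 0 with he | he
  · simp [hcoord, he]
  · have hce : c ≤ e i ^ 2 := hc _ (by positivity) (b i) (b.orthonormal.ne_zero i)
      (by rw [happly, map_smul, happly, smul_smul, sq])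
    rw [hcoord i (T u), mul_pow]
    exact mul_le_mul_of_nonneg_right hce (sq_nonneg _)

variable [CompleteSpace E] {f : E → ℝ} {g x : E}

lemma HasGradientAt.hasDerivAt_comp_add_smul {t : ℝ} {d : E}
    (h : HasGradientAt f g (x + t • d)) :
    HasDerivAt (fun s : ℝ => f (x + s • d)) ⟪g, d⟫ t := by
  have hline : HasDerivAt (fun s : ℝ => x + s • d) d t := by
    simpa using ((hasDerivAt_id t).smul_const d).const_add x
  exact (hasGradientAt_iff_hasFDerivAt.mp h).comp_hasDerivAt t hline

lemma ConvexOn.add_inner_gradient_le (hf : ConvexOn ℝ Set.univ f) (hd : DifferentiableAt ℝ f x)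
    (y : E) : f x + ⟪gradient f x, y - x⟫ ≤ f y := by
  have hline : ConvexOn ℝ Set.univ (fun s : ℝ => f (x + s • (y - x))) := by
    simpa [Function.comp_def, AffineMap.lineMap_apply_module', add_comm] using
      hf.comp_affineMap (AffineMap.lineMap x y : ℝ →ᵃ[ℝ] E)
  have hderiv : HasDerivAt (fun s : ℝ => f (x + s • (y - x))) ⟪gradient f x, y - x⟫ 0 :=
    HasGradientAt.hasDerivAt_comp_add_smul (by simpa using hd.hasGradientAt)
  have := hline.le_slope_of_hasDerivAt (Set.mem_univ 0) (Set.mem_univ 1) one_pos hderiv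
  simp only [slope_def_field, one_smul, zero_smul, add_zero, add_sub_cancel, sub_zero,
    div_one] at this
  linarith

lemma HasGradientAt.sub_half_mul_norm_sq (hf : HasGradientAt f g x) (c : ℝ) :
    HasGradientAt (fun z => f z - c / 2 * ‖z‖ ^ 2) (g - c • x) x := by
  rw [hasGradientAt_iff_hasFDerivAt] at hf ⊢
  refine (hf.sub ((hasStrictFDerivAt_norm_sq x).hasFDerivAt.const_mul (c / 2))).congr_fderiv ?_
  ext v
  simp only [_root_.sub_apply, InnerProductSpace.toDual_apply_apply,
    _root_.smul_apply, innerSL_apply_apply, nsmul_eq_mul, smul_eq_mul,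
    inner_sub_left, real_inner_smul_left]
  ring

lemma StrongConvexOn.add_inner_gradient_add_le {m : ℝ} (hf : StrongConvexOn Set.univ m f)
    (hd : DifferentiableAt ℝ f x) (y : E) :
    f x + ⟪gradient f x, y - x⟫ + m / 2 * ‖y - x‖ ^ 2 ≤ f y := by
  have hgrad := hd.hasGradientAt.sub_half_mul_norm_sq m
  have h := (strongConvexOn_iff_convex.mp hf).add_inner_gradient_le hgrad.differentiableAt y
  rw [hgrad.gradient, inner_sub_left, real_inner_smul_left] at h
  have hy : ‖y‖ ^ 2 = ‖x‖ ^ 2 + 2 * ⟪x, y - x⟫ + ‖y - x‖ ^ 2 := by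
    simpa using norm_add_sq_real x (y - x)
  rw [hy] at h
  linarith

lemma StrongConvexOn.mul_sq_norm_sub_le_inner_gradient_sub {m : ℝ}
    (hf : StrongConvexOn Set.univ m f) (hd : Differentiable ℝ f) (u v : E) :
    m * ‖u - v‖ ^ 2 ≤ ⟪gradient f u - gradient f v, u - v⟫ := by
  have huv := hf.add_inner_gradient_add_le (hd u) v
  have hvu := hf.add_inner_gradient_add_le (hd v) u
  rw [norm_sub_rev] at huv
  rw [← neg_sub u v, inner_neg_right] at huv
  rw [inner_sub_left]
  linarith

lemma le_add_inner_gradient_add_sq_of_lipschitz {L : ℝ} (hd : Differentiable ℝ f)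
    (hlip : ∀ u v, ‖gradient f u - gradient f v‖ ≤ L * ‖u - v‖) (x y : E) :
    f y ≤ f x + ⟪gradient f x, y - x⟫ + L / 2 * ‖y - x‖ ^ 2 := by
  set d := y - x
  have hψ : ∀ s : ℝ, HasDerivAt
      (fun s => f (x + s • d) - s * ⟪gradient f x, d⟫ - L / 2 * s ^ 2 * ‖d‖ ^ 2)
      (⟪gradient f (x + s • d), d⟫ - ⟪gradient f x, d⟫ - L * s * ‖d‖ ^ 2) s := by
    intro s
    have hline : HasDerivAt (fun s : ℝ => f (x + s • d)) ⟪gradient f (x + s • d), d⟫ s :=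
      (hd _).hasGradientAt.hasDerivAt_comp_add_smul
    exact ((hline.fun_sub ((hasDerivAt_id s).mul_const ⟪gradient f x, d⟫)).fun_sub
      (((hasDerivAt_pow 2 s).const_mul (L / 2)).mul_const (‖d‖ ^ 2))).congr_deriv
      (by push_cast; ring)
  obtain ⟨c, hc, hslope⟩ := exists_hasDerivAt_eq_slope _ _ one_pos
    (fun s _ => (hψ s).continuousAt.continuousWithinAt) (fun s _ => hψ s)
  have hderiv_nonpos :
      ⟪gradient f (x + c • d), d⟫ - ⟪gradient f x, d⟫ - L * c * ‖d‖ ^ 2 ≤ 0 := by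
    rw [← inner_sub_left, sub_nonpos]
    calc ⟪gradient f (x + c • d) - gradient f x, d⟫
        ≤ ‖gradient f (x + c • d) - gradient f x‖ * ‖d‖ := real_inner_le_norm _ _
      _ ≤ L * ‖c • d‖ * ‖d‖ := by gcongr; simpa using hlip (x + c • d) x
      _ = L * c * ‖d‖ ^ 2 := by rw [norm_smul, Real.norm_of_nonneg hc.1.le]; ring
  rw [hslope] at hderiv_nonpos
  simp only [one_smul, zero_smul, add_zero, d, add_sub_cancel] at hderiv_nonpos
  linarith

lemma ConvexOn.add_inner_gradient_add_sq_norm_gradient_sub_le {L : ℝ}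
    (hf : ConvexOn ℝ Set.univ f) (hd : Differentiable ℝ f) (hL : 0 < L)
    (hlip : ∀ u v, ‖gradient f u - gradient f v‖ ≤ L * ‖u - v‖) (x y : E) :
    f x + ⟪gradient f x, y - x⟫ + ‖gradient f y - gradient f x‖ ^ 2 / (2 * L) ≤ f y := by
  set δ := gradient f y - gradient f x
  -- `z` minimises the quadratic upper bound of `f - ⟪gradient f x, ·⟫` around `y`
  set z := y - L⁻¹ • δ
  have hlower := hf.add_inner_gradient_le (hd x) z
  have hupper := le_add_inner_gradient_add_sq_of_lipschitz hd hlip y z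
  have hzx : z - x = (y - x) - L⁻¹ • δ := by simp only [z]; abel
  have hzy : z - y = -(L⁻¹ • δ) := by simp only [z]; abel
  rw [hzx, inner_sub_right, real_inner_smul_right] at hlower
  rw [hzy, inner_neg_right, real_inner_smul_right, norm_neg, norm_smul, mul_pow,
    Real.norm_of_nonneg (inv_nonneg.mpr hL.le)] at hupper
  have hδ : ⟪gradient f y, δ⟫ - ⟪gradient f x, δ⟫ = ‖δ‖ ^ 2 := by
    rw [← inner_sub_left, real_inner_self_eq_norm_sq]
  have hcoef : L / 2 * (L⁻¹ ^ 2 * ‖δ‖ ^ 2) = L⁻¹ * ‖δ‖ ^ 2 - ‖δ‖ ^ 2 / (2 * L) := by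
    field_simp; ring
  have hδ' : L⁻¹ * ⟪gradient f y, δ⟫ - L⁻¹ * ⟪gradient f x, δ⟫ = L⁻¹ * ‖δ‖ ^ 2 := by
    rw [← mul_sub, hδ]
  linarith

lemma ConvexOn.sq_norm_gradient_sub_le_mul_inner {L : ℝ} (hf : ConvexOn ℝ Set.univ f)
    (hd : Differentiable ℝ f) (hL : 0 < L)
    (hlip : ∀ u v, ‖gradient f u - gradient f v‖ ≤ L * ‖u - v‖) (u v : E) :
    ‖gradient f u - gradient f v‖ ^ 2 ≤ L * ⟪gradient f u - gradient f v, u - v⟫ := by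
  have huv := hf.add_inner_gradient_add_sq_norm_gradient_sub_le hd hL hlip u v
  have hvu := hf.add_inner_gradient_add_sq_norm_gradient_sub_le hd hL hlip v u
  rw [norm_sub_rev, ← neg_sub u v, inner_neg_right] at huv
  have hhalves : ‖gradient f u - gradient f v‖ ^ 2 / (2 * L) * 2
      = ‖gradient f u - gradient f v‖ ^ 2 / L := by
    field_simp
  rw [← div_le_iff₀' hL, inner_sub_left]
  linarith

lemma hasGradientAt_of_abs_sub_inner_le_sq {K : ℝ}
    (h : ∀ y, |f y - f x - ⟪g, y - x⟫| ≤ K * ‖y - x‖ ^ 2) : HasGradientAt f g x := by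
  rw [hasGradientAt_iff_isLittleO]
  refine (Asymptotics.IsBigO.of_bound K (Filter.Eventually.of_forall fun y => ?_))
    |>.trans_isLittleO (Asymptotics.isLittleO_pow_sub_sub x one_lt_two)
  simpa using h y

lemma hasGradientAt_of_le_add_inner_of_lipschitz {g : E → E} {K : ℝ}
    (hsub : ∀ y y', f y + ⟪g y, y' - y⟫ ≤ f y')
    (hlip : ∀ y y', ‖g y - g y'‖ ≤ K * ‖y - y'‖) (y : E) : HasGradientAt f (g y) y := by
  refine hasGradientAt_of_abs_sub_inner_le_sq (K := K) fun y' => abs_le.mpr ⟨?_, ?_⟩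
  · linarith [hsub y y', mul_nonneg ((norm_nonneg _).trans (hlip y' y)) (norm_nonneg (y' - y))]
  · have hback := hsub y' y
    rw [← neg_sub y' y, inner_neg_right] at hback
    have hcs : ⟪g y' - g y, y' - y⟫ ≤ K * ‖y' - y‖ ^ 2 :=
      calc ⟪g y' - g y, y' - y⟫ ≤ ‖g y' - g y‖ * ‖y' - y‖ := real_inner_le_norm _ _
        _ ≤ K * ‖y' - y‖ * ‖y' - y‖ := by gcongr; exact hlip y' y
        _ = K * ‖y' - y‖ ^ 2 := by ring
    rw [inner_sub_left] at hcs
    linarith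

lemma surjective_of_strongly_monotone_of_lipschitz {A : E → E} {μ L : ℝ} (hμ : 0 < μ)
    (hμL : μ ≤ L) (hmono : ∀ u v, μ * ‖u - v‖ ^ 2 ≤ ⟪A u - A v, u - v⟫)
    (hlip : ∀ u v, ‖A u - A v‖ ≤ L * ‖u - v‖) : Function.Surjective A := by
  intro w
  have hL : 0 < L := hμ.trans_le hμL
  set r := μ ^ 2 / L ^ 2
  have hr : 0 < r := by positivity
  have hr1 : r ≤ 1 := (div_le_one (by positivity)).mpr (pow_le_pow_left₀ hμ.le hμL 2)
  -- with step `μ / L ^ 2` the gradient step contracts distances by `√(1 - r) ≤ 1 - r / 2`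
  set Φ : E → E := fun z => z - (μ / L ^ 2) • (A z - w)
  have hΦ : ∀ a b, ‖Φ a - Φ b‖ ≤ (1 - r / 2) * ‖a - b‖ := by
    intro a b
    have hdiff : Φ a - Φ b = (a - b) - (μ / L ^ 2) • (A a - A b) := by simp only [Φ]; module
    have hsq : ‖Φ a - Φ b‖ ^ 2 ≤ ((1 - r / 2) * ‖a - b‖) ^ 2 := by
      rw [hdiff, norm_sub_sq_real, norm_smul, real_inner_smul_right, Real.norm_of_nonneg
        (by positivity), real_inner_comm]
      have hinner := mul_le_mul_of_nonneg_left (hmono a b) (by positivity : 0 ≤ μ / L ^ 2)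
      have hnorm := mul_le_mul_of_nonneg_left (pow_le_pow_left₀ (norm_nonneg _) (hlip a b) 2)
        (sq_nonneg (μ / L ^ 2))
      have hstep : μ / L ^ 2 * μ = r := by simp only [r]; ring
      have hstep2 : (μ / L ^ 2) ^ 2 * L ^ 2 = r := by simp only [r]; field_simp
      have hslack := mul_nonneg (sq_nonneg r) (sq_nonneg ‖a - b‖)
      calc ‖a - b‖ ^ 2 - 2 * (μ / L ^ 2 * ⟪A a - A b, a - b⟫) + (μ / L ^ 2 * ‖A a - A b‖) ^ 2
          ≤ ‖a - b‖ ^ 2 - 2 * (μ / L ^ 2 * μ) * ‖a - b‖ ^ 2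
            + (μ / L ^ 2) ^ 2 * L ^ 2 * ‖a - b‖ ^ 2 := by linarith
        _ ≤ ((1 - r / 2) * ‖a - b‖) ^ 2 := by rw [hstep, hstep2]; linarith
    exact (sq_le_sq₀ (norm_nonneg _) (mul_nonneg (by linarith) (norm_nonneg _))).mp hsq
  have hcontr : ContractingWith ⟨1 - r / 2, by linarith⟩ Φ :=
    ⟨by change 1 - r / 2 < 1; linarith,
      LipschitzWith.of_dist_le_mul fun a b => by rw [dist_eq_norm, dist_eq_norm]; exact hΦ a b⟩
  refine ⟨hcontr.fixedPoint Φ, ?_⟩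
  have hfix : Φ (hcontr.fixedPoint Φ) = hcontr.fixedPoint Φ := hcontr.fixedPoint_isFixedPt
  simpa [Φ, hμ.ne', hL.ne', sub_eq_zero] using hfix

section Dual

variable {G F : E → ℝ} {T : E →L[ℝ] E} {lam : E → E}

lemma isGreatest_range_of_gradient_eq_neg (hG : ConvexOn ℝ Set.univ G)
    (hT : (T : E →ₗ[ℝ] E).IsSymmetric) {y l : E} (hd : DifferentiableAt ℝ G l)
    (hl : gradient G l = -T y) :
    IsGreatest (Set.range fun z => -G z - ⟪y, T z⟫) (-G l - ⟪y, T l⟫) := by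
  refine ⟨⟨l, rfl⟩, ?_⟩
  rintro _ ⟨z, rfl⟩
  have h := hG.add_inner_gradient_le hd z
  have hsymm : ∀ u, ⟪T y, u⟫ = ⟪y, T u⟫ := hT y
  rw [hl, inner_neg_left, inner_sub_right, hsymm, hsymm] at h
  dsimp only
  linarith

lemma norm_apply_sub_apply_le_of_gradient_eq_neg {μ : ℝ} (hμ : 0 < μ)
    (hsm : ∀ u v, μ * ‖u - v‖ ^ 2 ≤ ⟪gradient G u - gradient G v, u - v⟫)
    (hlam : ∀ y, gradient G (lam y) = -T y) (y y' : E) :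
    ‖T (lam y) - T (lam y')‖ ≤ ‖T‖ ^ 2 / μ * ‖y - y'‖ := by
  have hgap : μ * ‖lam y - lam y'‖ ≤ ‖T‖ * ‖y - y'‖ := by
    rcases (norm_nonneg (lam y - lam y')).eq_or_lt with h0 | hpos
    · rw [← h0, mul_zero]; positivity
    refine le_of_mul_le_mul_right ?_ hpos
    calc μ * ‖lam y - lam y'‖ * ‖lam y - lam y'‖
        = μ * ‖lam y - lam y'‖ ^ 2 := by ring
      _ ≤ ⟪T (y' - y), lam y - lam y'⟫ := by
          simpa only [hlam, map_sub, neg_sub_neg] using hsm (lam y) (lam y')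
      _ ≤ ‖T (y' - y)‖ * ‖lam y - lam y'‖ := real_inner_le_norm _ _
      _ ≤ ‖T‖ * ‖y - y'‖ * ‖lam y - lam y'‖ := by
          rw [norm_sub_rev y y']; gcongr; exact T.le_opNorm _
  calc ‖T (lam y) - T (lam y')‖ = ‖T (lam y - lam y')‖ := by rw [map_sub]
    _ ≤ ‖T‖ * ‖lam y - lam y'‖ := T.le_opNorm _
    _ ≤ ‖T‖ * (‖T‖ / μ * ‖y - y'‖) := by
        gcongr
        rw [div_mul_eq_mul_div, le_div_iff₀ hμ]
        linarith
    _ = ‖T‖ ^ 2 / μ * ‖y - y'‖ := by ring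

lemma sq_norm_apply_sub_le_of_gradient_eq_neg {L : ℝ}
    (hco : ∀ u v,
      ‖gradient G u - gradient G v‖ ^ 2 ≤ L * ⟪gradient G u - gradient G v, u - v⟫)
    (hT : (T : E →ₗ[ℝ] E).IsSymmetric) (hlam : ∀ y, gradient G (lam y) = -T y) (y y' : E) :
    ‖T (y - y')‖ ^ 2 ≤ L * ⟪-T (lam y) - -T (lam y'), y - y'⟫ := by
  have h := hco (lam y') (lam y)
  rw [hlam, hlam, neg_sub_neg, ← map_sub] at h
  have hsymm : ⟪T (y - y'), lam y' - lam y⟫ = ⟪-T (lam y) - -T (lam y'), y - y'⟫ := by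
    rw [neg_sub_neg, ← map_sub]
    exact (hT _ _).trans (real_inner_comm _ _)
  rwa [hsymm] at h

variable (hG : ConvexOn ℝ Set.univ G) (hGd : Differentiable ℝ G)
  (hT : (T : E →ₗ[ℝ] E).IsSymmetric) (hlam : ∀ y, gradient G (lam y) = -T y)
  (hF : ∀ y, F y = ⨆ z, -G z - ⟪y, T z⟫)
include hG hGd hT hlam hF

lemma dual_eq_of_gradient_eq_neg (y : E) : F y = -G (lam y) - ⟪y, T (lam y)⟫ :=
  (hF y).trans (isGreatest_range_of_gradient_eq_neg hG hT (hGd _) (hlam y)).csSup_eq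

lemma dual_add_inner_le (y y' : E) : F y + ⟪-T (lam y), y' - y⟫ ≤ F y' := by
  have h := (isGreatest_range_of_gradient_eq_neg hG hT (hGd _) (hlam y')).2 ⟨lam y, rfl⟩
  rw [← dual_eq_of_gradient_eq_neg hG hGd hT hlam hF] at h
  rw [dual_eq_of_gradient_eq_neg hG hGd hT hlam hF y, inner_neg_left, inner_sub_right,
    real_inner_comm y' (T (lam y)), real_inner_comm y (T (lam y))]
  dsimp only at h
  linarith

end Dual

end

lemma posMinEig_le {m : ℕ} {M : Matrix (Fin m) (Fin m) ℝ} {t : ℝ} (ht : 0 < t)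
    {v : EuclideanSpace ℝ (Fin m)} (hv : v ≠ 0) (hMv : Matrix.toEuclideanLin M v = t • v) :
    posMinEig M ≤ t :=
  csInf_le ⟨0, fun _ hs => hs.1.le⟩ ⟨ht, v, hv, hMv⟩

theorem stmt5_general {m : ℕ} (μ L : ℝ) (hμ : 0 < μ) (hL : μ ≤ L)
    (G : EuclideanSpace ℝ (Fin m) → ℝ)
    (hG : ConvexOn ℝ Set.univ (fun lam => G lam - μ / 2 * ‖lam‖ ^ 2))
    (hGd : Differentiable ℝ G)
    (hGs : ∀ u v : EuclideanSpace ℝ (Fin m), ‖gradient G u - gradient G v‖ ≤ L * ‖u - v‖)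
    (S : Matrix (Fin m) (Fin m) ℝ) (hSpsd : S.PosSemidef)
    (F : EuclideanSpace ℝ (Fin m) → ℝ)
    (hF : ∀ y, F y = ⨆ lam : EuclideanSpace ℝ (Fin m),
      (-G lam - ⟪y, Matrix.toEuclideanLin S lam⟫)) :
    Differentiable ℝ F ∧
    (∀ y y' : EuclideanSpace ℝ (Fin m),
        ‖gradient F y - gradient F y'‖ ≤ lambdaMax S ^ 2 / μ * ‖y - y'‖) ∧
    (∀ y ∈ LinearMap.range (Matrix.toEuclideanLin S),
      ∀ y' ∈ LinearMap.range (Matrix.toEuclideanLin S),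
        posMinEig (S * S) / L * ‖y - y'‖ ^ 2
          ≤ ⟪gradient F y - gradient F y', y - y'⟫) := by
  set T := LinearMap.toContinuousLinearMap (Matrix.toEuclideanLin S)
  have hT : (T : EuclideanSpace ℝ (Fin m) →ₗ[ℝ] EuclideanSpace ℝ (Fin m)).IsSymmetric :=
    Matrix.isSymmetric_toEuclideanLin_iff.mpr hSpsd.1
  have hGstrong : StrongConvexOn Set.univ μ G := strongConvexOn_iff_convex.mpr hG
  have hGconv : ConvexOn ℝ Set.univ G := hGstrong.convexOn fun r => by positivity
  have hsm := hGstrong.mul_sq_norm_sub_le_inner_gradient_sub hGd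
  obtain ⟨gradInv, hgradInv⟩ :=
    (surjective_of_strongly_monotone_of_lipschitz hμ hL hsm hGs).hasRightInverse
  set lam := fun y => gradInv (-T y)
  have hlam : ∀ y, gradient G (lam y) = -T y := fun y => hgradInv _
  have hlip : ∀ y y', ‖-T (lam y) - -T (lam y')‖ ≤ lambdaMax S ^ 2 / μ * ‖y - y'‖ := fun y y' => by
    rw [neg_sub_neg, norm_sub_rev]
    exact norm_apply_sub_apply_le_of_gradient_eq_neg hμ hsm hlam y y'
  have hgrad : ∀ y, HasGradientAt F (-T (lam y)) y :=
    hasGradientAt_of_le_add_inner_of_lipschitz (dual_add_inner_le hGconv hGd hT hlam hF) hlip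
  refine ⟨fun y => (hgrad y).differentiableAt, fun y y' => ?_, fun y hy y' hy' => ?_⟩
  · rw [(hgrad y).gradient, (hgrad y').gradient]
    exact hlip y y'
  · rw [(hgrad y).gradient, (hgrad y').gradient, div_mul_eq_mul_div,
      div_le_iff₀ (hμ.trans_le hL)]
    have hspec := hT.mul_sq_norm_le_sq_norm_apply
      (fun t ht v hv hTv => posMinEig_le (M := S * S) ht hv
        (by rw [Matrix.toLpLin_mul_same]; exact hTv))
      (Submodule.sub_mem _ hy hy')
    have hco := sq_norm_apply_sub_le_of_gradient_eq_neg
      (hGconv.sq_norm_gradient_sub_le_mul_inner hGd (hμ.trans_le hL) hGs) hT hlam y y'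
    exact (hspec.trans hco).trans_eq (mul_comm _ _)

/-- Let `G : ℝ^m → ℝ` be `μ`-strongly convex (`μ > 0`) and `L`-smooth (`L ≥ μ`), and let
`S` be a symmetric positive semidefinite `m × m` matrix.  Then
`F(y) = sup_λ (−G(λ) − ⟪y, S λ⟫)` is `(λmax(S)²/μ)`-smooth, and `F` is
`(λ⁺min(S²)/L)`-strongly convex on `Range(S)`: for all `y, y' ∈ Range(S)`,
`⟪∇F(y) − ∇F(y'), y − y'⟫ ≥ (λ⁺min(S²)/L) ‖y − y'‖²`. -/
theorem stmt5 {m : ℕ} (μ L : ℝ) (hμ : 0 < μ) (hL : μ ≤ L)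
    (G : EuclideanSpace ℝ (Fin m) → ℝ)
    (hG : ConvexOn ℝ Set.univ (fun lam => G lam - μ / 2 * ‖lam‖ ^ 2))
    (hGd : Differentiable ℝ G)
    (hGs : ∀ u v : EuclideanSpace ℝ (Fin m), ‖gradient G u - gradient G v‖ ≤ L * ‖u - v‖)
    (S : Matrix (Fin m) (Fin m) ℝ) (hSsymm : S.IsSymm) (hSpsd : S.PosSemidef)
    (F : EuclideanSpace ℝ (Fin m) → ℝ)
    (hF : ∀ y, F y = ⨆ lam : EuclideanSpace ℝ (Fin m),
      (-G lam - ⟪y, Matrix.toEuclideanLin S lam⟫)) :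
    Differentiable ℝ F ∧
    (∀ y y' : EuclideanSpace ℝ (Fin m),
        ‖gradient F y - gradient F y'‖ ≤ lambdaMax S ^ 2 / μ * ‖y - y'‖) ∧
    (∀ y ∈ LinearMap.range (Matrix.toEuclideanLin S),
      ∀ y' ∈ LinearMap.range (Matrix.toEuclideanLin S),
        posMinEig (S * S) / L * ‖y - y'‖ ^ 2
          ≤ ⟪gradient F y - gradient F y', y - y'⟫) :=
  stmt5_general μ L hμ hL G hG hGd hGs S hSpsd F hF
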